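/- arXiv:1502.00541 — 3 statements merged into one kernel-verified Lean document; each statement's English description precedes it below -/
import Mathlib

section
/- Let ω be a unit in Z₂[i] (the ring of integers of Q₂(i)) and let m = 1 + i, 𝔪 = (m). Then ω is a square in Q₂(i) if and only if ω ≡ ±1 (mod 𝔪⁵). -/
/-!
`ℤ₂[i]` is a domain in which `1 + i` is prime, with residue map `ℤ₂[i] → 𝔽₂` given by `i ↦ 1`.
If `y² = ω t²` with `t ≠ 0`, cancelling powers of `1 + i` makes `t`, hence `y`, prime to `1 + i`.
Such elements are `≡ 1` or `≡ i (mod 𝔪²)`, and since `(1 + i)² = 2i`, `z ≡ 1 (mod 𝔪²)` forces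
`z² ≡ 1 (mod 𝔪⁵)`; so `y²` and `t²` are `≡ ±1 (mod 𝔪⁵)`, and so is `ω`.
Conversely `𝔪⁵ = 4𝔪`, so `ω ≡ 1` means `ω = 1 + 4μ` with `μ ∈ 𝔪`, and `ω = (1 + 2y)²` for a
solution of the separable equation `y² + y = μ`, which Hensel's lemma over `ℤ₂` provides;
the case `ω ≡ -1` follows by multiplying by `i² = -1`.
-/

open Polynomial

/-- A model of `ℤ₂[i]`, the ring of integers of `ℚ₂(i)`. -/
noncomputable abbrev Z2i : Type := AdjoinRoot (X ^ 2 + 1 : Polynomial ℤ_[2])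

/-- The element `i` of `ℤ₂[i]`. -/
noncomputable abbrev Z2i.i : Z2i := AdjoinRoot.root _

/-- The maximal ideal `𝔪 = (1 + i)` of `ℤ₂[i]`. -/
noncomputable abbrev Z2i.m : Ideal Z2i := Ideal.span {1 + Z2i.i}

theorem Prime.exists_sq_eq_mul_sq_not_dvd {R : Type*} [CommMonoidWithZero R] [IsCancelMulZero R]
    [WfDvdMonoid R] {p a x y : R} (hp : Prime p) (hy : y ≠ 0) (h : x ^ 2 = a * y ^ 2) :
    ∃ x₀ y₀, ¬p ∣ y₀ ∧ x₀ ^ 2 = a * y₀ ^ 2 := by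
  obtain ⟨n, y₀, hy₀, rfl⟩ := WfDvdMonoid.max_power_factor' hy hp.not_isUnit
  clear hy
  induction n generalizing x with
  | zero => exact ⟨x, y₀, hy₀, by simpa using h⟩
  | succ n ih =>
    have hpx : p ∣ x ^ 2 :=
      h ▸ (((dvd_pow_self p n.succ_ne_zero).mul_right y₀).pow two_ne_zero).mul_left a
    obtain ⟨x', rfl⟩ := hp.dvd_of_dvd_pow hpx
    exact ih (mul_left_cancel₀ (pow_ne_zero 2 hp.ne_zero) (by
      rw [← mul_pow, h, pow_succ p n]; simp only [mul_pow, mul_left_comm, mul_comm]))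

theorem PadicInt.isUnit_iff_toZMod_ne_zero {p : ℕ} [Fact p.Prime] {x : ℤ_[p]} :
    IsUnit x ↔ PadicInt.toZMod x ≠ 0 := by
  rw [Ne, ← RingHom.mem_ker, PadicInt.ker_toZMod, IsLocalRing.mem_maximalIdeal, mem_nonunits_iff,
    not_not]

theorem PadicInt.norm_lt_one_iff_toZMod_eq_zero {p : ℕ} [Fact p.Prime] {x : ℤ_[p]} :
    ‖x‖ < 1 ↔ PadicInt.toZMod x = 0 := by
  rw [← PadicInt.mem_nonunits, mem_nonunits_iff, PadicInt.isUnit_iff_toZMod_ne_zero, not_not]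

namespace Z2i

open AdjoinRoot

local notation "ι" => AdjoinRoot.of (X ^ 2 + 1 : ℤ_[2][X])

lemma i_sq : i ^ 2 = -1 := by
  have h := eval₂_root (X ^ 2 + 1 : ℤ_[2][X])
  simp only [eval₂_add, eval₂_pow, eval₂_X, eval₂_one] at h
  linear_combination h

lemma monic_X_sq_add_one : (X ^ 2 + 1 : ℤ_[2][X]).Monic := by monicity!

lemma natDegree_X_sq_add_one : (X ^ 2 + 1 : ℤ_[2][X]).natDegree = 2 := by compute_degree!

lemma irreducible_X_sq_add_one : Irreducible (X ^ 2 + 1 : ℤ_[2][X]) := by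
  rw [monic_X_sq_add_one.irreducible_iff_roots_eq_zero_of_degree_le_three
    natDegree_X_sq_add_one.ge (by rw [natDegree_X_sq_add_one]; norm_num)]
  refine Multiset.eq_zero_of_forall_notMem fun x hx => ?_
  have hx : x ^ 2 + 1 = 0 := by simpa using isRoot_of_mem_roots hx
  -- `-1` is not a square modulo `4`
  have h4 := congrArg (PadicInt.toZModPow 2) hx
  rw [map_add, map_pow, map_one, map_zero] at h4
  generalize PadicInt.toZModPow 2 x = y at h4
  revert y
  decide

instance : IsDomain Z2i := isDomain_of_prime irreducible_X_sq_add_one.prime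

lemma exists_eq_add_mul_i (z : Z2i) : ∃ a b : ℤ_[2], z = ι a + ι b * i := by
  obtain ⟨p, rfl⟩ := mk_surjective z
  have hdeg : (p %ₘ (X ^ 2 + 1)).natDegree ≤ 1 := by
    have := natDegree_modByMonic_lt p monic_X_sq_add_one
      (fun h => by simpa [h] using natDegree_X_sq_add_one)
    rw [natDegree_X_sq_add_one] at this
    omega
  refine ⟨(p %ₘ (X ^ 2 + 1)).coeff 0, (p %ₘ (X ^ 2 + 1)).coeff 1, ?_⟩
  rw [← mk_leftInverse monic_X_sq_add_one (mk _ p), modByMonicHom_mk]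
  conv_lhs => rw [eq_X_add_C_of_natDegree_le_one hdeg]
  simp only [map_add, map_mul, mk_C, mk_X]
  ring

lemma of_injective : Function.Injective ι :=
  of.injective_of_degree_ne_zero (by
    rw [degree_eq_natDegree monic_X_sq_add_one.ne_zero, natDegree_X_sq_add_one]
    decide)

lemma one_add_i_ne_zero : 1 + i ≠ 0 := by
  intro h
  have h2 : ι 2 = 0 := by
    rw [map_ofNat]
    linear_combination (1 - i) * h + i_sq
  exact two_ne_zero (of_injective (h2.trans (map_zero _).symm))

noncomputable def toZModTwo : Z2i →+* ZMod 2 :=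
  lift PadicInt.toZMod 1 (by simp only [eval₂_add, eval₂_X_pow, one_pow, eval₂_one]; decide)

@[simp] lemma toZModTwo_of (a : ℤ_[2]) : toZModTwo (ι a) = PadicInt.toZMod a := lift_of _

@[simp] lemma toZModTwo_i : toZModTwo i = 1 := lift_root _

lemma ker_toZModTwo : RingHom.ker toZModTwo = m := by
  refine le_antisymm (fun z hz => ?_) ?_
  · obtain ⟨a, b, rfl⟩ := exists_eq_add_mul_i z
    have hab : PadicInt.toZMod (a + b) = 0 := by simpa using hz
    rw [← RingHom.mem_ker, PadicInt.ker_toZMod, PadicInt.maximalIdeal_eq_span_p,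
      Ideal.mem_span_singleton] at hab
    obtain ⟨c, hc⟩ := hab
    rw [Nat.cast_ofNat] at hc
    refine Ideal.mem_span_singleton.2 ⟨(1 - i) * ι c + ι b * i, ?_⟩
    have : ι a = ι 2 * ι c - ι b := by rw [← map_mul, ← map_sub, ← hc]; ring_nf
    rw [this, map_ofNat]
    linear_combination (ι c - ι b) * i_sq
  · rw [Ideal.span_le, Set.singleton_subset_iff, SetLike.mem_coe, RingHom.mem_ker, map_add, map_one,
      toZModTwo_i]
    decide

instance : m.IsPrime := ker_toZModTwo ▸ RingHom.ker_isPrime _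

lemma prime_one_add_i : Prime (1 + i) :=
  (Ideal.span_singleton_prime one_add_i_ne_zero).1 inferInstance

lemma mem_m_iff {z : Z2i} : z ∈ m ↔ toZModTwo z = 0 := by
  rw [← ker_toZModTwo, RingHom.mem_ker]

lemma toZModTwo_eq_one_of_notMem {z : Z2i} (hz : z ∉ m) : toZModTwo z = 1 := by
  rw [mem_m_iff] at hz
  generalize toZModTwo z = x at hz
  revert x
  decide

lemma mem_m_pow_iff {z : Z2i} {n : ℕ} : z ∈ m ^ n ↔ (1 + i) ^ n ∣ z := by
  rw [Ideal.span_singleton_pow, Ideal.mem_span_singleton]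

lemma sub_one_mem_m_sq_or_sub_i_mem_m_sq {z : Z2i} (hz : z ∉ m) :
    z - 1 ∈ m ^ 2 ∨ z - i ∈ m ^ 2 := by
  have hz1 : z - 1 ∈ m := by simp [mem_m_iff, toZModTwo_eq_one_of_notMem hz]
  obtain ⟨w, hw⟩ := Ideal.mem_span_singleton.1 hz1
  rw [mem_m_pow_iff, mem_m_pow_iff, pow_two (1 + i)]
  by_cases hw' : w ∈ m
  · exact .inl (hw ▸ mul_dvd_mul_left _ (Ideal.mem_span_singleton.1 hw'))
  · have hwi : w - i ∈ m := by simp [mem_m_iff, toZModTwo_eq_one_of_notMem hw']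
    rw [show z - i = (1 + i) * (w - i) by linear_combination hw + i_sq]
    exact .inr (mul_dvd_mul_left _ (Ideal.mem_span_singleton.1 hwi))

lemma sq_sub_one_mem_m_pow_five {z : Z2i} (hz : z - 1 ∈ m ^ 2) : z ^ 2 - 1 ∈ m ^ 5 := by
  obtain ⟨w, hw⟩ := mem_m_pow_iff.1 hz
  have hww : w * (w - i) ∈ m := by
    rw [mem_m_iff, map_mul, map_sub, toZModTwo_i]
    generalize toZModTwo w = x
    revert x
    decide
  obtain ⟨v, hv⟩ := Ideal.mem_span_singleton.1 hww
  -- `(1 + i) ^ 2 = 2 * i`, so `z ^ 2 - 1 = (1 + i) ^ 4 * w * (w - i)`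
  exact mem_m_pow_iff.2 ⟨v, by
    linear_combination (z + 1 + (1 + i) ^ 2 * w) * hw + (1 + i) ^ 4 * hv +
      (1 + i) ^ 2 * w * (i + 2) * i_sq⟩

lemma sq_sub_one_mem_or_sq_add_one_mem {z : Z2i} (hz : z ∉ m) :
    z ^ 2 - 1 ∈ m ^ 5 ∨ z ^ 2 + 1 ∈ m ^ 5 := by
  refine (sub_one_mem_m_sq_or_sub_i_mem_m_sq hz).imp sq_sub_one_mem_m_pow_five fun h => ?_
  have h' : (-i * z) - 1 ∈ m ^ 2 := by
    convert Ideal.mul_mem_left _ (-i) h using 1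
    linear_combination -i_sq
  convert (Ideal.neg_mem_iff _).2 (sq_sub_one_mem_m_pow_five h') using 1
  linear_combination z ^ 2 * i_sq

lemma sub_one_mem_or_add_one_mem_of_sq_eq {ω y t : Z2i} (hω : IsUnit ω) (ht : t ∉ m)
    (h : y ^ 2 = ω * t ^ 2) : ω - 1 ∈ m ^ 5 ∨ ω + 1 ∈ m ^ 5 := by
  have hp := prime_one_add_i
  have ht' : ¬(1 + i) ∣ t ^ 2 := fun hd => ht (Ideal.mem_span_singleton.2 (hp.dvd_of_dvd_pow hd))
  have hy : y ∉ m := fun hy => by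
    have := h ▸ dvd_pow (Ideal.mem_span_singleton.1 hy) two_ne_zero
    exact (hp.dvd_or_dvd this).elim (fun hd => hp.not_isUnit (isUnit_of_dvd_unit hd hω)) ht'
  have hcancel : ∀ x, x * t ^ 2 ∈ m ^ 5 → x ∈ m ^ 5 := fun x hx =>
    mem_m_pow_iff.2 (hp.pow_dvd_of_dvd_mul_right 5 ht' (mem_m_pow_iff.1 hx))
  rcases sq_sub_one_mem_or_sq_add_one_mem hy with hy5 | hy5 <;>
    rcases sq_sub_one_mem_or_sq_add_one_mem ht with ht5 | ht5
  · exact .inl (hcancel _ (by convert sub_mem hy5 ht5 using 1; linear_combination -h))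
  · exact .inr (hcancel _ (by convert add_mem hy5 ht5 using 1; linear_combination -h))
  · exact .inr (hcancel _ (by convert add_mem hy5 ht5 using 1; linear_combination -h))
  · exact .inl (hcancel _ (by convert sub_mem hy5 ht5 using 1; linear_combination -h))

lemma exists_sq_sub_sq_add_eq_and_mul_eq {a b : ℤ_[2]}
    (hab : PadicInt.toZMod a + PadicInt.toZMod b = 0) :
    ∃ c d : ℤ_[2], c ^ 2 - d ^ 2 + c = a ∧ (2 * c + 1) * d = b := by
  -- eliminating `d` leaves `F c = 0`, and `F` has a simple root modulo `2` at `0`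
  let F : ℤ_[2][X] := (X ^ 2 + X - C a) * (2 * X + 1) ^ 2 - C b ^ 2
  have hF0 : aeval (0 : ℤ_[2]) F = -(a + b ^ 2) := by simp [F, sub_eq_add_neg, add_comm]
  have hF'0 : aeval (0 : ℤ_[2]) (derivative F) = 1 - 4 * a := by
    norm_num [F, derivative_pow, ← sub_eq_add_neg, mul_comm a]
  have hF' : ‖aeval (0 : ℤ_[2]) (derivative F)‖ = 1 := by
    refine PadicInt.isUnit_iff.1 (PadicInt.isUnit_iff_toZMod_ne_zero.2 ?_)
    rw [hF'0, map_sub, map_mul, map_one, map_ofNat]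
    generalize PadicInt.toZMod a = x
    revert x
    decide
  obtain ⟨c, hc, -⟩ := hensels_lemma (F := F) (a := (0 : ℤ_[2])) (by
    rw [hF', one_pow, PadicInt.norm_lt_one_iff_toZMod_eq_zero, hF0, map_neg, map_add, map_pow]
    revert hab
    generalize PadicInt.toZMod a = x
    generalize PadicInt.toZMod b = y
    revert x y
    decide)
  have hc' : (c ^ 2 + c - a) * (2 * c + 1) ^ 2 = b ^ 2 := by simpa [F, sub_eq_zero] using hc
  obtain ⟨u, hu⟩ := (PadicInt.isUnit_iff_toZMod_ne_zero.2 (show PadicInt.toZMod (2 * c + 1) ≠ 0 by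
    rw [map_add, map_mul, map_one, map_ofNat]
    generalize PadicInt.toZMod c = x
    revert x
    decide)).exists_right_inv
  exact ⟨c, b * u, by linear_combination u ^ 2 * hc' - (c ^ 2 + c - a) * (1 + (2 * c + 1) * u) * hu,
    by linear_combination b * hu⟩

lemma exists_sq_add_self_eq {μ : Z2i} (hμ : μ ∈ m) : ∃ y, y ^ 2 + y = μ := by
  obtain ⟨a, b, rfl⟩ := exists_eq_add_mul_i μ
  obtain ⟨c, d, hre, him⟩ :=
    exists_sq_sub_sq_add_eq_and_mul_eq (a := a) (b := b) (by simpa [mem_m_iff] using hμ)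
  refine ⟨ι c + ι d * i, ?_⟩
  rw [← hre, ← him]
  simp only [map_add, map_sub, map_mul, map_pow, map_ofNat, map_one]
  linear_combination ι d ^ 2 * i_sq

lemma exists_sq_eq_of_sub_one_mem {ω : Z2i} (h : ω - 1 ∈ m ^ 5) : ∃ z, z ^ 2 = ω := by
  obtain ⟨v, hv⟩ := mem_m_pow_iff.1 h
  -- `(1 + i) ^ 4 = -4`, so `ω = 1 + 4 μ` with `μ = -(1 + i) v ∈ m`
  obtain ⟨y, hy⟩ := exists_sq_add_self_eq (μ := -((1 + i) * v))
    (Ideal.neg_mem_iff _ |>.2 (Ideal.mul_mem_right _ _ (Ideal.mem_span_singleton_self _)))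
  exact ⟨1 + 2 * y, by linear_combination 4 * hy - hv - (1 + i) * v * (i ^ 2 + 4 * i + 5) * i_sq⟩

end Z2i

/-- A unit `ω` of `ℤ₂[i]` is a square in `ℚ₂(i)` (the fraction field)
iff `ω ≡ ±1 (mod 𝔪⁵)`. -/
theorem unit_isSquare_in_fractionField_iff (ω : Z2iˣ) :
    IsSquare (algebraMap Z2i (FractionRing Z2i) (ω : Z2i)) ↔
      ((ω : Z2i) - 1 ∈ Z2i.m ^ 5 ∨ (ω : Z2i) + 1 ∈ Z2i.m ^ 5) := by
  constructor
  · rintro ⟨r, hr⟩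
    obtain ⟨y, t, ht, rfl⟩ := IsFractionRing.div_surjective Z2i r
    have ht0 : t ≠ 0 := nonZeroDivisors.ne_zero ht
    have h : y ^ 2 = ω * t ^ 2 := IsFractionRing.injective Z2i (FractionRing Z2i) (by
      have ht' : algebraMap Z2i (FractionRing Z2i) t ≠ 0 := by simpa using ht0
      field_simp at hr
      simp only [map_mul, map_pow]
      linear_combination -hr)
    obtain ⟨y₀, t₀, ht₀, h₀⟩ := Z2i.prime_one_add_i.exists_sq_eq_mul_sq_not_dvd ht0 h
    exact Z2i.sub_one_mem_or_add_one_mem_of_sq_eq ω.isUnit (mt Ideal.mem_span_singleton.1 ht₀) h₀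
  · rintro (h | h)
    · obtain ⟨z, hz⟩ := Z2i.exists_sq_eq_of_sub_one_mem h
      exact ⟨algebraMap _ _ z, by rw [← map_mul, ← sq, hz]⟩
    · obtain ⟨z, hz⟩ := Z2i.exists_sq_eq_of_sub_one_mem (ω := -ω) (by
        simpa [neg_sub_left, add_comm] using (Ideal.neg_mem_iff _).2 h)
      exact ⟨algebraMap _ _ (Z2i.i * z), by
        rw [← map_mul]
        congr 1
        linear_combination hz - z ^ 2 * Z2i.i_sq⟩
end

section
/- The group of units U of Z₂[i] satisfies U² = {±1} · U^(5), i.e., a unit u ∈ Z₂[i]^× is a square if and only if u ≡ ±1 modulo 𝔪⁵, where 𝔪 = (1+i). -/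
/-!
Write elements of `ℤ₂[i]` as `a + b i` with `a, b ∈ ℤ₂`. Since `(1 + i)⁵ = -4(1 + i)`, the
element `a + b i` lies in `𝔪⁵` iff `a + b ≡ a - b ≡ 0 (mod 8)`. A unit `w = a + b i` has
`a² + b²` odd, and `w² ∓ 1 = (a² - b² ∓ 1) + 2ab i`, so that `w² ≡ ±1 (mod 𝔪⁵)` is a
congruence mod 8 checked on residues. Conversely, `z ≡ 1 (mod 𝔪⁵)` means
`z = (1 + 4(c + d)) + 4(c - d) i`; its square root `p + q i` comes from a root `p ≡ 1` of the
biquadratic equation satisfied by the real part, which Hensel's lemma provides in `ℤ₂`. The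
case `z ≡ -1` follows from `z = (i r)²` when `-z = r²`.
-/

open Polynomial

theorem Units.isSquare_val_iff {M : Type*} [CommMonoid M] {u : Mˣ} :
    IsSquare (u : M) ↔ IsSquare u := by
  refine ⟨fun ⟨r, hr⟩ ↦ ?_, fun h ↦ h.map (Units.coeHom M)⟩
  obtain ⟨v, rfl⟩ := isUnit_of_mul_isUnit_left (hr ▸ u.isUnit)
  exact ⟨v, Units.ext (by simpa using hr)⟩

namespace Polynomial

variable {R : Type*} [CommRing R]

theorem degree_X_sq_add_one [Nontrivial R] : (X ^ 2 + 1 : R[X]).degree = 2 := by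
  compute_degree!

theorem monic_X_sq_add_one : (X ^ 2 + 1 : R[X]).Monic := monic_X_pow_add_C 1 two_ne_zero

end Polynomial

namespace AdjoinRoot

variable {R : Type*} [CommRing R]

theorem sq_root_X_sq_add_one : root (X ^ 2 + 1 : R[X]) ^ 2 = -1 := by
  have h := mk_self (f := (X ^ 2 + 1 : R[X]))
  rw [map_add, map_pow, mk_X, map_one] at h
  exact eq_neg_of_add_eq_zero_left h

theorem exists_eq_of_add_of_mul_root [Nontrivial R] (z : AdjoinRoot (X ^ 2 + 1 : R[X])) :
    ∃ a b : R, z = of _ a + of _ b * root _ := by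
  obtain ⟨P, rfl⟩ := mk_surjective z
  set Q := P %ₘ (X ^ 2 + 1) with hQdef
  have hdeg : Q.degree ≤ 1 := by
    have h := degree_modByMonic_lt P monic_X_sq_add_one
    rw [degree_X_sq_add_one] at h
    exact Order.le_of_lt_succ h
  refine ⟨Q.coeff 0, Q.coeff 1, ?_⟩
  rw [← mk_leftInverse monic_X_sq_add_one (mk _ P), modByMonicHom_mk, ← hQdef]
  conv_lhs => rw [eq_X_add_C_of_degree_le_one hdeg]
  simp only [map_add, map_mul, mk_C, mk_X]
  ring

theorem of_add_of_mul_root_inj [Nontrivial R] {a b c d : R} :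
    of _ a + of _ b * root (X ^ 2 + 1 : R[X]) = of _ c + of _ d * root _ ↔ a = c ∧ b = d := by
  refine ⟨fun h ↦ ?_, fun ⟨hac, hbd⟩ ↦ hac ▸ hbd ▸ rfl⟩
  have hmk : mk (X ^ 2 + 1 : R[X]) (C (b - d) * X + C (a - c)) = 0 := by
    simp only [map_add, map_mul, mk_C, mk_X, map_sub]
    linear_combination h
  have hzero : C (b - d) * X + C (a - c) = 0 := by
    rw [← (modByMonic_eq_zero_iff_dvd monic_X_sq_add_one).mpr (mk_eq_zero.mp hmk),
      eq_comm, modByMonic_eq_self_iff monic_X_sq_add_one, degree_X_sq_add_one]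
    exact degree_linear_le.trans_lt (by decide)
  have h0 := congrArg (coeff · 0) hzero
  have h1 := congrArg (coeff · 1) hzero
  simp only [coeff_add, coeff_C_mul_X, coeff_C, coeff_zero] at h0 h1
  constructor
  · simpa [sub_eq_zero] using h0
  · simpa [sub_eq_zero] using h1

theorem isUnit_sq_add_sq [Nontrivial R] {a b : R}
    (h : IsUnit (of _ a + of _ b * root (X ^ 2 + 1 : R[X]))) : IsUnit (a ^ 2 + b ^ 2) := by
  obtain ⟨v, hv⟩ := h.exists_right_inv
  obtain ⟨c, d, rfl⟩ := exists_eq_of_add_of_mul_root v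
  have hcd : of _ (a * c - b * d) + of _ (a * d + b * c) * root (X ^ 2 + 1 : R[X]) =
      of _ 1 + of _ 0 * root (X ^ 2 + 1 : R[X]) := by
    simp only [map_sub, map_add, map_mul, map_one, map_zero]
    linear_combination hv - of _ b * of _ d * sq_root_X_sq_add_one (R := R)
  obtain ⟨h1, h2⟩ := of_add_of_mul_root_inj.mp hcd
  exact IsUnit.of_mul_eq_one (c ^ 2 + d ^ 2)
    (by linear_combination (a * c - b * d + 1) * h1 + (a * d + b * c) * h2)

end AdjoinRoot

namespace PadicInt

theorem pow_dvd_iff_toZModPow_eq_zero {p : ℕ} [Fact p.Prime] (n : ℕ) (x : ℤ_[p]) :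
    (p : ℤ_[p]) ^ n ∣ x ↔ toZModPow n x = 0 := by
  rw [← Ideal.mem_span_singleton, ← ker_toZModPow, RingHom.mem_ker]

/-- For such a root `p`, `p + (2(c - d) / p) i` squares to `(1 + 4(c + d)) + 4(c - d) i`. -/
theorem exists_isUnit_pow_four_sub_mul_sq_sub_sq_eq_zero (c d : ℤ_[2]) :
    ∃ p : ℤ_[2], IsUnit p ∧ p ^ 4 - (1 + 4 * (c + d)) * p ^ 2 - (2 * (c - d)) ^ 2 = 0 := by
  set F : ℤ_[2][X] := X ^ 4 - C (1 + 4 * (c + d)) * X ^ 2 - C ((2 * (c - d)) ^ 2)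
  have hF : F.aeval (1 : ℤ_[2]) = -(4 * ((c + d) + (c - d) ^ 2)) := by
    rw [coe_aeval_eq_eval]
    simp only [F, eval_sub, eval_mul, eval_pow, eval_C, eval_X]
    ring
  have hF' : F.derivative.aeval (1 : ℤ_[2]) = 2 * (1 - 4 * (c + d)) := by
    rw [coe_aeval_eq_eval]
    simp only [F, derivative_sub, derivative_mul, derivative_C, derivative_X_pow, eval_sub,
      eval_add, eval_mul, eval_pow, eval_C, eval_X, eval_zero]
    push_cast
    ring
  have hF'norm : ‖F.derivative.aeval (1 : ℤ_[2])‖ = 2⁻¹ := by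
    have hunit : IsUnit (1 - 4 * (c + d)) :=
      IsLocalRing.isUnit_one_sub_self_of_mem_nonunits _
        (mem_nonunits.mpr ((norm_lt_one_iff_dvd _).mpr ⟨2 * (c + d), by push_cast; ring⟩))
    rw [hF', norm_mul, isUnit_iff.mp hunit, mul_one]
    simpa using norm_p (p := 2)
  have hFnorm : ‖F.aeval (1 : ℤ_[2])‖ < ‖F.derivative.aeval (1 : ℤ_[2])‖ ^ 2 := by
    obtain ⟨k, hk⟩ : ((2 : ℕ) : ℤ_[2]) ^ 1 ∣ (c + d) + (c - d) ^ 2 := by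
      rw [pow_dvd_iff_toZModPow_eq_zero]
      simp only [map_add, map_sub, map_pow]
      generalize toZModPow 1 c = x
      generalize toZModPow 1 d = y
      revert x y
      decide
    have h8 : ‖F.aeval (1 : ℤ_[2])‖ ≤ (2 : ℝ) ^ (-3 : ℤ) := by
      exact_mod_cast (norm_le_pow_iff_mem_span_pow _ 3).mpr
        (Ideal.mem_span_singleton.mpr ⟨-k, by rw [hF, hk]; push_cast; ring⟩)
    rw [hF'norm]
    exact h8.trans_lt (by norm_num)
  obtain ⟨p, hroot, hclose, -, -⟩ := hensels_lemma hFnorm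
  refine ⟨p, ?_, by simpa [F] using hroot⟩
  have hnonunit : 1 - p ∈ nonunits ℤ_[2] := by
    rw [mem_nonunits, norm_sub_rev]
    exact hclose.trans (by rw [hF'norm]; norm_num)
  simpa using IsLocalRing.isUnit_one_sub_self_of_mem_nonunits _ hnonunit

end PadicInt

namespace Z2i

open AdjoinRoot PadicInt

theorem mem_m_pow_five_iff {a b : ℤ_[2]} :
    of _ a + of _ b * i ∈ m ^ 5 ↔ 8 ∣ a + b ∧ 8 ∣ a - b := by
  have hπ (c d : ℤ_[2]) : (1 + i) ^ 5 * (of _ c + of _ d * i) =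
      of _ (-4 * (c - d)) + of _ (-4 * (c + d)) * i := by
    have hi := sq_root_X_sq_add_one (R := ℤ_[2])
    simp only [map_mul, map_sub, map_add, map_neg, map_ofNat]
    grind
  rw [m, Ideal.span_singleton_pow, Ideal.mem_span_singleton]
  constructor
  · rintro ⟨w, hw⟩
    obtain ⟨c, d, rfl⟩ := exists_eq_of_add_of_mul_root w
    obtain ⟨rfl, rfl⟩ := of_add_of_mul_root_inj.mp (hw.trans (hπ c d))
    exact ⟨⟨-c, by ring⟩, ⟨d, by ring⟩⟩
  · rintro ⟨⟨c, hc⟩, ⟨d, hd⟩⟩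
    have ha : a = -4 * (-c - d) := mul_left_cancel₀ (two_ne_zero (α := ℤ_[2]))
      (by linear_combination hc + hd)
    have hb : b = -4 * (-c + d) := mul_left_cancel₀ (two_ne_zero (α := ℤ_[2]))
      (by linear_combination hc - hd)
    exact ⟨of _ (-c) + of _ d * i, by rw [hπ, ha, hb]⟩

theorem mul_self_sub_one_mem_or_mul_self_add_one_mem {w : Z2i} (hw : IsUnit w) :
    w * w - 1 ∈ m ^ 5 ∨ w * w + 1 ∈ m ^ 5 := by
  obtain ⟨a, b, rfl⟩ := exists_eq_of_add_of_mul_root w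
  have hunit := (isUnit_sq_add_sq hw).map (toZModPow 3 : ℤ_[2] →+* ZMod (2 ^ 3))
  have hsq (e : ℤ_[2]) : (of _ a + of _ b * i) * (of _ a + of _ b * i) + of _ e =
      of _ (a ^ 2 - b ^ 2 + e) + of _ (2 * a * b) * i := by
    have hi := sq_root_X_sq_add_one (R := ℤ_[2])
    simp only [map_mul, map_sub, map_add, map_pow, map_ofNat]
    grind
  rw [sub_eq_add_neg, ← map_one (of _), ← map_neg, hsq, hsq, mem_m_pow_five_iff,
    mem_m_pow_five_iff]
  simp only [show (8 : ℤ_[2]) = ((2 : ℕ) : ℤ_[2]) ^ 3 by norm_num,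
    pow_dvd_iff_toZModPow_eq_zero, map_add, map_sub, map_mul, map_pow, map_neg, map_one,
    map_ofNat] at hunit ⊢
  generalize toZModPow 3 a = x at hunit ⊢
  generalize toZModPow 3 b = y at hunit ⊢
  revert x y
  decide

theorem isSquare_of_sub_one_mem {z : Z2i} (h : z - 1 ∈ m ^ 5) : IsSquare z := by
  obtain ⟨a, b, rfl⟩ := exists_eq_of_add_of_mul_root z
  rw [sub_eq_add_neg, ← map_one (of _), ← map_neg, add_right_comm, ← map_add,
    mem_m_pow_five_iff] at h
  obtain ⟨⟨c, hc⟩, ⟨d, hd⟩⟩ := h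
  have ha : a = 1 + 4 * (c + d) := mul_left_cancel₀ (two_ne_zero (α := ℤ_[2]))
    (by linear_combination hc + hd)
  have hb : b = 2 * (2 * (c - d)) := mul_left_cancel₀ (two_ne_zero (α := ℤ_[2]))
    (by linear_combination hc - hd)
  obtain ⟨p, hunit, hp⟩ := exists_isUnit_pow_four_sub_mul_sq_sub_sq_eq_zero c d
  obtain ⟨q, hq⟩ : p ∣ 2 * (c - d) := hunit.dvd
  have hre : p ^ 2 - q ^ 2 = 1 + 4 * (c + d) := by
    refine mul_left_cancel₀ (pow_ne_zero 2 hunit.ne_zero) ?_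
    linear_combination hp + (2 * (c - d) + p * q) * hq
  refine ⟨of _ p + of _ q * i, ?_⟩
  have hi := sq_root_X_sq_add_one (R := ℤ_[2])
  rw [ha, ← hre, hb, hq]
  simp only [map_mul, map_sub, map_pow, map_ofNat]
  grind

theorem isSquare_of_add_one_mem {z : Z2i} (h : z + 1 ∈ m ^ 5) : IsSquare z := by
  obtain ⟨r, hr⟩ := isSquare_of_sub_one_mem (z := -z) (by rwa [← neg_add', neg_mem_iff])
  refine ⟨i * r, ?_⟩
  linear_combination (-1 : Z2i) * hr - r * r * sq_root_X_sq_add_one (R := ℤ_[2])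

end Z2i

/-- `U² = {±1}·U⁽⁵⁾`: a unit `u` of `ℤ₂[i]` is a square (in the unit group)
iff `u ≡ ±1 (mod 𝔪⁵)` where `𝔪 = (1+i)`. -/
theorem unit_isSquare_iff (u : Z2iˣ) :
    IsSquare u ↔ ((u : Z2i) - 1 ∈ Z2i.m ^ 5 ∨ (u : Z2i) + 1 ∈ Z2i.m ^ 5) := by
  rw [← Units.isSquare_val_iff]
  constructor
  · rintro ⟨w, hw⟩
    rw [hw]
    exact Z2i.mul_self_sub_one_mem_or_mul_self_add_one_mem
      (isUnit_of_mul_isUnit_left (hw ▸ u.isUnit))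
  · rintro (h | h)
    exacts [Z2i.isSquare_of_sub_one_mem h, Z2i.isSquare_of_add_one_mem h]
end

section
/- Let K be a field of characteristic not 2, let d ∈ K be a non-square, L = K(√d), and let a, b ∈ K be such that a + b√d is not a square in L. Set M = L(√(a + b√d)). Then M/K is a cyclic extension of degree 4 if and only if a² - d b² ∈ d·(K^×)². -/
/-!
Write `r = √d` and `t = √(a + b√d)` in `M`. If `Gal(M/K)` is cyclic of order 4 with generator
`σ`, then `σ r = -r` (otherwise `r ∈ K`), and `σ² t = -t` because `σ²` fixes `L` but is not the
identity. So `t · σ t · r` is fixed by `σ`, hence lies in `K`, and its square is `(a² - d b²) d`.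
Conversely, if `a² - d b² = d e²`, then `t' = r e / t` is a square root of `a - b√d`, hence a
`K`-conjugate of `t`. The automorphism `τ` with `τ t = t'` satisfies `τ r = -r` and `τ t' = -t`,
so `τ² t = -t` and `τ` has order `4 = [M : K]`.
-/

open IntermediateField Polynomial Module

section Quadratic

variable {F E : Type*} [Field F] [Field E] [Algebra F E] {c : F} {u : E}

theorem linearIndependent_one_of_sq_eq_algebraMap (hc : ¬IsSquare c)
    (hu : u ^ 2 = algebraMap F E c) : LinearIndependent F ![1, u] := by
  refine LinearIndependent.pair_iff.mpr fun p q hpq => ?_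
  rw [Algebra.smul_def, Algebra.smul_def, mul_one] at hpq
  by_cases hq : q = 0
  · subst hq
    simpa using hpq
  · refine absurd ⟨-p / q, (algebraMap F E).injective ?_⟩ hc
    have hq' : algebraMap F E q ≠ 0 := by simpa using hq
    have hu' : u = algebraMap F E (-p / q) := by
      rw [map_div₀, map_neg, eq_div_iff hq']
      linear_combination hpq
    rw [← hu, hu', sq, map_mul]

theorem minpoly_eq_X_sq_sub_C_of_sq_eq (hc : ¬IsSquare c) (hu : u ^ 2 = algebraMap F E c) :
    minpoly F u = X ^ 2 - C c := by
  refine (minpoly.eq_of_irreducible_of_monic ?_ (by simp [hu])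
    (monic_X_pow_sub_C c two_ne_zero)).symm
  exact X_pow_sub_C_irreducible_of_prime Nat.prime_two fun b hb => hc ⟨b, by rw [← hb, sq]⟩

theorem finrank_eq_two_of_sq_eq (hc : ¬IsSquare c) (hu : u ^ 2 = algebraMap F E c)
    (hgen : F⟮u⟯ = ⊤) : finrank F E = 2 := by
  have hint : IsIntegral F u := ⟨X ^ 2 - C c, monic_X_pow_sub_C c two_ne_zero, by simp [hu]⟩
  rw [← finrank_top', ← hgen, adjoin.finrank hint, minpoly_eq_X_sq_sub_C_of_sq_eq hc hu,
    natDegree_X_pow_sub_C]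

theorem exists_eq_algebraMap_add_algebraMap_mul (hc : ¬IsSquare c)
    (hu : u ^ 2 = algebraMap F E c) (hgen : F⟮u⟯ = ⊤) (x : E) :
    ∃ p q : F, x = algebraMap F E p + algebraMap F E q * u := by
  have hspan := (linearIndependent_one_of_sq_eq_algebraMap hc hu).span_eq_top_of_card_eq_finrank
    (by rw [finrank_eq_two_of_sq_eq hc hu hgen, Fintype.card_fin])
  rw [Matrix.range_cons_cons_empty] at hspan
  obtain ⟨p, q, hx⟩ := Submodule.mem_span_pair.mp (hspan ▸ Submodule.mem_top : x ∈ _)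
  exact ⟨p, q, by rw [← hx, Algebra.smul_def, Algebra.smul_def, mul_one]⟩

theorem ne_zero_of_sq_eq_algebraMap (hc : ¬IsSquare c) (hu : u ^ 2 = algebraMap F E c) :
    u ≠ 0 := by
  rintro rfl
  rw [zero_pow two_ne_zero, eq_comm, map_eq_zero] at hu
  exact hc (hu ▸ IsSquare.zero)

theorem notMem_range_algebraMap_of_sq_eq (hc : ¬IsSquare c) (hu : u ^ 2 = algebraMap F E c) :
    u ∉ Set.range (algebraMap F E) := by
  rintro ⟨k, rfl⟩
  exact hc ⟨k, (algebraMap F E).injective (by rw [map_mul, ← sq, hu])⟩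

theorem AlgEquiv.apply_eq_neg_of_sq_eq (hu : u ^ 2 = algebraMap F E c) (σ : E ≃ₐ[F] E)
    (hσ : σ u ≠ u) : σ u = -u :=
  (sq_eq_sq_iff_eq_or_eq_neg.mp (by rw [← map_pow, hu, AlgEquiv.commutes])).resolve_left hσ

end Quadratic

section Galois

variable {F E : Type*} [Field F] [Field E] [Algebra F E] [FiniteDimensional F E]

theorem mem_range_algebraMap_of_apply_eq_self [IsGalois F E] {σ : E ≃ₐ[F] E}
    (hσ : ∀ g, g ∈ Subgroup.zpowers σ) {x : E} (hx : σ x = x) :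
    x ∈ Set.range (algebraMap F E) :=
  (IsGalois.mem_range_algebraMap_iff_fixed x).mpr fun g =>
    (Subgroup.zpowers_le (H := MulAction.stabilizer (E ≃ₐ[F] E) x)).mpr hx (hσ g)

theorem isGalois_and_isCyclic_of_orderOf_eq_finrank (τ : E ≃ₐ[F] E)
    (hτ : orderOf τ = finrank F E) : IsGalois F E ∧ IsCyclic (E ≃ₐ[F] E) := by
  have hcard : Nat.card (E ≃ₐ[F] E) = finrank F E := by
    refine le_antisymm ?_ (hτ ▸ orderOf_le_card)
    rw [Nat.card_eq_fintype_card]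
    exact AlgEquiv.card_le
  exact ⟨IsGalois.of_card_aut_eq_finrank F E hcard,
    isCyclic_of_orderOf_eq_card τ (hτ.trans hcard.symm)⟩

theorem exists_algEquiv_apply_eq_of_aeval_minpoly_eq_zero {x y : E} (hgen : F⟮x⟯ = ⊤)
    (hy : aeval y (minpoly F x) = 0) : ∃ τ : E ≃ₐ[F] E, τ x = y := by
  let pb : PowerBasis F E :=
    (adjoin.powerBasis (IsIntegral.of_finite F x)).map ((equivOfEq hgen).trans topEquiv)
  have hpb : pb.gen = x := rfl
  have hy' : aeval y (minpoly F pb.gen) = 0 := hpb ▸ hy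
  let τ : E →ₐ[F] E := pb.lift y hy'
  exact ⟨AlgEquiv.ofBijective τ (Algebra.IsAlgebraic.algHom_bijective τ), pb.lift_gen y hy'⟩

end Galois

theorem aeval_sq_sub_C_sq_sub_C_eq_zero {K M : Type*} [Field K] [Field M] [Algebra K M]
    {a c : K} {u : M} (hu : (u ^ 2 - algebraMap K M a) ^ 2 = algebraMap K M c) :
    aeval u ((X ^ 2 - C a) ^ 2 - C c) = 0 := by
  simp only [map_sub, map_pow, aeval_X, aeval_C, hu, sub_self]

section Tower

variable {K L M : Type*} [Field K] [Field L] [Field M] [Algebra K L] [Algebra L M] [Algebra K M]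
  [IsScalarTower K L M] {d a b : K} {s : L} {α : L} {t : M}

theorem algebraMap_mem_of_algebraMap_mem (hd : ¬IsSquare d) (hs : s ^ 2 = algebraMap K L d)
    (hLgen : K⟮s⟯ = ⊤) {S : Subalgebra K M} (hsS : algebraMap L M s ∈ S) (x : L) :
    algebraMap L M x ∈ S := by
  obtain ⟨p, q, rfl⟩ := exists_eq_algebraMap_add_algebraMap_mul hd hs hLgen x
  rw [map_add, map_mul, ← IsScalarTower.algebraMap_apply, ← IsScalarTower.algebraMap_apply]
  exact add_mem (S.algebraMap_mem p) (mul_mem (S.algebraMap_mem q) hsS)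

theorem Subalgebra.eq_top_of_algebraMap_mem_of_mem (hd : ¬IsSquare d)
    (hs : s ^ 2 = algebraMap K L d) (hLgen : K⟮s⟯ = ⊤) (hα : ¬IsSquare α)
    (ht : t ^ 2 = algebraMap L M α) (hMgen : L⟮t⟯ = ⊤) {S : Subalgebra K M}
    (hsS : algebraMap L M s ∈ S) (htS : t ∈ S) : S = ⊤ := by
  refine eq_top_iff.mpr fun x _ => ?_
  obtain ⟨p, q, rfl⟩ := exists_eq_algebraMap_add_algebraMap_mul hα ht hMgen x
  have hL := algebraMap_mem_of_algebraMap_mem hd hs hLgen hsS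
  exact add_mem (hL p) (mul_mem (hL q) htS)

theorem AlgEquiv.apply_algebraMap_eq_self (hd : ¬IsSquare d) (hs : s ^ 2 = algebraMap K L d)
    (hLgen : K⟮s⟯ = ⊤) (σ : M ≃ₐ[K] M) (hσs : σ (algebraMap L M s) = algebraMap L M s)
    (x : L) : σ (algebraMap L M x) = algebraMap L M x :=
  algebraMap_mem_of_algebraMap_mem hd hs hLgen
    (S := AlgHom.equalizer σ.toAlgHom (AlgHom.id K M)) hσs x

theorem AlgEquiv.eq_one_of_apply_eq_self (hd : ¬IsSquare d) (hs : s ^ 2 = algebraMap K L d)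
    (hLgen : K⟮s⟯ = ⊤) (hα : ¬IsSquare α) (ht : t ^ 2 = algebraMap L M α)
    (hMgen : L⟮t⟯ = ⊤) (σ : M ≃ₐ[K] M) (hσs : σ (algebraMap L M s) = algebraMap L M s)
    (hσt : σ t = t) : σ = 1 := by
  have htop := Subalgebra.eq_top_of_algebraMap_mem_of_mem hd hs hLgen hα ht hMgen
    (S := AlgHom.equalizer σ.toAlgHom (AlgHom.id K M)) hσs hσt
  ext x
  exact (htop ▸ Algebra.mem_top : x ∈ AlgHom.equalizer σ.toAlgHom (AlgHom.id K M))

theorem finrank_eq_four_of_sq_eq (hd : ¬IsSquare d) (hs : s ^ 2 = algebraMap K L d)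
    (hLgen : K⟮s⟯ = ⊤) (hα : ¬IsSquare α) (ht : t ^ 2 = algebraMap L M α)
    (hMgen : L⟮t⟯ = ⊤) : finrank K M = 4 := by
  rw [← Module.finrank_mul_finrank K L M, finrank_eq_two_of_sq_eq hd hs hLgen,
    finrank_eq_two_of_sq_eq hα ht hMgen]

theorem finiteDimensional_of_sq_eq (hd : ¬IsSquare d) (hs : s ^ 2 = algebraMap K L d)
    (hLgen : K⟮s⟯ = ⊤) (hα : ¬IsSquare α) (ht : t ^ 2 = algebraMap L M α)
    (hMgen : L⟮t⟯ = ⊤) : FiniteDimensional K M :=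
  .of_finrank_pos (by rw [finrank_eq_four_of_sq_eq hd hs hLgen hα ht hMgen]; norm_num)

theorem algebraMap_sq_eq_of_sq_eq (hs : s ^ 2 = algebraMap K L d) :
    algebraMap L M s ^ 2 = algebraMap K M d := by
  rw [← map_pow, hs, ← IsScalarTower.algebraMap_apply]

theorem sq_eq_algebraMap_add_algebraMap_mul
    (ht : t ^ 2 = algebraMap L M (algebraMap K L a + algebraMap K L b * s)) :
    t ^ 2 = algebraMap K M a + algebraMap K M b * algebraMap L M s := by
  rw [ht, map_add, map_mul, ← IsScalarTower.algebraMap_apply, ← IsScalarTower.algebraMap_apply]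

theorem adjoin_eq_top_of_sq_eq (hd : ¬IsSquare d) (hs : s ^ 2 = algebraMap K L d)
    (hLgen : K⟮s⟯ = ⊤) (hns : ¬IsSquare (algebraMap K L a + algebraMap K L b * s))
    (ht : t ^ 2 = algebraMap L M (algebraMap K L a + algebraMap K L b * s)) (hMgen : L⟮t⟯ = ⊤)
    (hb : b ≠ 0) : K⟮t⟯ = ⊤ := by
  have hsK : algebraMap L M s ∈ K⟮t⟯ := by
    have hbM : algebraMap K M b ≠ 0 := by simpa using hb
    rw [show algebraMap L M s = (t ^ 2 - algebraMap K M a) / algebraMap K M b by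
      rw [sq_eq_algebraMap_add_algebraMap_mul ht]; field_simp; ring]
    exact div_mem (sub_mem (pow_mem (mem_adjoin_simple_self K t) 2) (K⟮t⟯.algebraMap_mem a))
      (K⟮t⟯.algebraMap_mem b)
  exact toSubalgebra_injective <| Subalgebra.eq_top_of_algebraMap_mem_of_mem hd hs hLgen hns ht
    hMgen (S := K⟮t⟯.toSubalgebra) hsK (mem_adjoin_simple_self K t)

theorem minpoly_eq_of_sq_eq (hd : ¬IsSquare d) (hs : s ^ 2 = algebraMap K L d)
    (hLgen : K⟮s⟯ = ⊤) (hns : ¬IsSquare (algebraMap K L a + algebraMap K L b * s))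
    (ht : t ^ 2 = algebraMap L M (algebraMap K L a + algebraMap K L b * s)) (hMgen : L⟮t⟯ = ⊤)
    (hb : b ≠ 0) : minpoly K t = (X ^ 2 - C a) ^ 2 - C (d * b ^ 2) := by
  have := finiteDimensional_of_sq_eq hd hs hLgen hns ht hMgen
  have hmonic : ((X ^ 2 - C a) ^ 2 - C (d * b ^ 2) : K[X]).Monic := by monicity!
  have hdeg : ((X ^ 2 - C a) ^ 2 - C (d * b ^ 2) : K[X]).natDegree = 4 := by compute_degree!
  have hroot : aeval t ((X ^ 2 - C a) ^ 2 - C (d * b ^ 2)) = 0 := by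
    refine aeval_sq_sub_C_sq_sub_C_eq_zero ?_
    rw [sq_eq_algebraMap_add_algebraMap_mul ht, add_sub_cancel_left, mul_pow,
      algebraMap_sq_eq_of_sq_eq hs, map_mul, map_pow, mul_comm]
  refine (eq_of_monic_of_dvd_of_natDegree_le (minpoly.monic (.of_finite K t)) hmonic
    (minpoly.dvd K t hroot) ?_).symm
  rw [hdeg, ← adjoin.finrank (.of_finite K t), adjoin_eq_top_of_sq_eq hd hs hLgen hns ht hMgen hb,
    finrank_top', finrank_eq_four_of_sq_eq hd hs hLgen hns ht hMgen]

theorem orderOf_eq_four_of_apply_eq_neg (h2 : (2 : K) ≠ 0) (hd : ¬IsSquare d)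
    (hs : s ^ 2 = algebraMap K L d) (hLgen : K⟮s⟯ = ⊤) {α : L} (hα : ¬IsSquare α)
    (ht : t ^ 2 = algebraMap L M α) (hMgen : L⟮t⟯ = ⊤) (τ : M ≃ₐ[K] M)
    (hτs : τ (algebraMap L M s) = -algebraMap L M s) (hτt : (τ ^ 2) t = -t) :
    orderOf τ = 4 := by
  have hτ2s : (τ ^ 2) (algebraMap L M s) = algebraMap L M s := by
    rw [sq, AlgEquiv.mul_apply, hτs, map_neg, hτs, neg_neg]
  refine orderOf_eq_prime_pow (p := 2) (n := 1) (fun h => ?_) ?_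
  · have h2M : (2 : M) ≠ 0 := by
      rw [← map_ofNat (algebraMap K M) 2, ← map_zero (algebraMap K M)]
      exact (algebraMap K M).injective.ne h2
    rw [pow_one] at h
    have htt : -t = t := by rw [← hτt, h, AlgEquiv.one_apply]
    exact mul_ne_zero h2M (ne_zero_of_sq_eq_algebraMap hα ht) (by linear_combination -htt)
  · rw [show τ ^ 2 ^ (1 + 1) = τ ^ 2 * τ ^ 2 by group]
    refine AlgEquiv.eq_one_of_apply_eq_self hd hs hLgen hα ht hMgen _ ?_ ?_
    · rw [AlgEquiv.mul_apply, hτ2s, hτ2s]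
    · rw [AlgEquiv.mul_apply, hτt, map_neg, hτt, neg_neg]

theorem exists_algEquiv_orderOf_eq_four (h2 : (2 : K) ≠ 0) (hd : ¬IsSquare d)
    (hs : s ^ 2 = algebraMap K L d) (hLgen : K⟮s⟯ = ⊤)
    (hns : ¬IsSquare (algebraMap K L a + algebraMap K L b * s))
    (ht : t ^ 2 = algebraMap L M (algebraMap K L a + algebraMap K L b * s)) (hMgen : L⟮t⟯ = ⊤)
    {e : K} (he : e ≠ 0) (heq : a ^ 2 - d * b ^ 2 = d * e ^ 2) :
    ∃ τ : M ≃ₐ[K] M, orderOf τ = 4 := by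
  have ht2 := sq_eq_algebraMap_add_algebraMap_mul ht
  have hr2 : algebraMap L M s ^ 2 = algebraMap K M d := algebraMap_sq_eq_of_sq_eq hs
  have ht0 : t ≠ 0 := ne_zero_of_sq_eq_algebraMap hns ht
  have := finiteDimensional_of_sq_eq hd hs hLgen hns ht hMgen
  have hb : b ≠ 0 := by
    rintro rfl
    refine hd ⟨a / e, ?_⟩
    field_simp
    linear_combination -heq
  have heqM := congrArg (algebraMap K M) heq
  simp only [map_sub, map_mul, map_pow] at heqM
  set r := algebraMap L M s
  set t' := r * algebraMap K M e / t
  have htt' : t * t' = r * algebraMap K M e := mul_div_cancel₀ _ ht0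
  have ht'2 : t' ^ 2 = algebraMap K M a - algebraMap K M b * r := by
    rw [div_pow, div_eq_iff (pow_ne_zero 2 ht0), ht2]
    linear_combination (algebraMap K M e ^ 2 + algebraMap K M b ^ 2) * hr2 - heqM
  obtain ⟨τ, hτt⟩ := exists_algEquiv_apply_eq_of_aeval_minpoly_eq_zero (y := t')
    (adjoin_eq_top_of_sq_eq hd hs hLgen hns ht hMgen hb) (by
      rw [minpoly_eq_of_sq_eq hd hs hLgen hns ht hMgen hb]
      refine aeval_sq_sub_C_sq_sub_C_eq_zero ?_
      rw [ht'2, map_mul, map_pow, ← hr2]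
      ring)
  have hτr : τ r = -r := by
    have h := congrArg τ ht2
    rw [map_pow, hτt, ht'2, map_add, map_mul, AlgEquiv.commutes, AlgEquiv.commutes] at h
    have hb' : algebraMap K M b * (τ r + r) = 0 := by linear_combination -h
    exact eq_neg_of_add_eq_zero_left ((mul_eq_zero.mp hb').resolve_left (by simpa using hb))
  have hτt' : τ t' = -t := by
    have h := congrArg τ htt'
    rw [map_mul, map_mul, hτt, hτr, AlgEquiv.commutes, neg_mul, ← htt'] at h
    have ht'0 : t' ≠ 0 := right_ne_zero_of_mul <| htt' ▸
      mul_ne_zero (ne_zero_of_sq_eq_algebraMap hd hr2) (by simpa using he)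
    exact mul_left_cancel₀ ht'0 (by linear_combination h)
  exact ⟨τ, orderOf_eq_four_of_apply_eq_neg h2 hd hs hLgen hns ht hMgen τ hτr
    (by rw [sq, AlgEquiv.mul_apply, hτt, hτt'])⟩

theorem exists_ne_zero_sub_eq_mul_sq_of_generator (hd : ¬IsSquare d)
    (hs : s ^ 2 = algebraMap K L d) (hLgen : K⟮s⟯ = ⊤)
    (hns : ¬IsSquare (algebraMap K L a + algebraMap K L b * s))
    (ht : t ^ 2 = algebraMap L M (algebraMap K L a + algebraMap K L b * s)) (hMgen : L⟮t⟯ = ⊤)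
    (σ : M ≃ₐ[K] M) (hσ2 : σ ^ 2 ≠ 1)
    (hfix : ∀ x, σ x = x → x ∈ Set.range (algebraMap K M)) :
    ∃ e : K, e ≠ 0 ∧ a ^ 2 - d * b ^ 2 = d * e ^ 2 := by
  have ht2 := sq_eq_algebraMap_add_algebraMap_mul ht
  have hr2 : algebraMap L M s ^ 2 = algebraMap K M d := algebraMap_sq_eq_of_sq_eq hs
  set r := algebraMap L M s
  have hσr : σ r = -r := σ.apply_eq_neg_of_sq_eq hr2 fun h =>
    notMem_range_algebraMap_of_sq_eq hd hr2 (hfix r h)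
  have hσ2r : (σ ^ 2) r = r := by rw [sq, AlgEquiv.mul_apply, hσr, map_neg, hσr, neg_neg]
  have hσ2t : (σ ^ 2) t = -t := by
    have hsq : (σ ^ 2) t ^ 2 = t ^ 2 := by
      rw [← map_pow, ht, AlgEquiv.apply_algebraMap_eq_self hd hs hLgen _ hσ2r]
    exact (sq_eq_sq_iff_eq_or_eq_neg.mp hsq).resolve_left fun h =>
      hσ2 (AlgEquiv.eq_one_of_apply_eq_self hd hs hLgen hns ht hMgen _ hσ2r h)
  have hσt : σ t ^ 2 = algebraMap K M a - algebraMap K M b * r := by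
    rw [← map_pow, ht2, map_add, map_mul, AlgEquiv.commutes, AlgEquiv.commutes, hσr]
    ring
  obtain ⟨c, hc⟩ := hfix (t * σ t * r) (by
    rw [map_mul, map_mul, ← AlgEquiv.mul_apply, ← sq, hσ2t, hσr]
    ring)
  have hc0 : c ≠ 0 := by
    rintro rfl
    rw [map_zero, eq_comm] at hc
    have ht0 := ne_zero_of_sq_eq_algebraMap hns ht
    exact mul_ne_zero (mul_ne_zero ht0 (by simpa using ht0))
      (ne_zero_of_sq_eq_algebraMap hd hr2) hc
  have hcsq : c ^ 2 = d * (a ^ 2 - d * b ^ 2) := (algebraMap K M).injective (by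
    rw [map_pow, hc, mul_pow, mul_pow, ht2, hσt, hr2]
    simp only [map_mul, map_sub, map_pow]
    linear_combination (-(algebraMap K M b) ^ 2 * algebraMap K M d) * hr2)
  have hd0 : d ≠ 0 := fun h => hd (h ▸ IsSquare.zero)
  refine ⟨c / d, div_ne_zero hc0 hd0, ?_⟩
  field_simp
  linear_combination -hcsq

end Tower

/-- Lemma on cyclic quartic extensions: let `K` be a field of characteristic ≠ 2,
`d ∈ K` a non-square, `L = K(√d)`, and `a, b ∈ K` with `a + b√d` not a square in
`L`; set `M = L(√(a + b√d))`. Then `M/K` is cyclic of degree 4 iff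
`a² - d·b² ∈ d·(Kˣ)²`. -/
theorem cyclic_quartic_iff (K L M : Type*) [Field K] [Field L] [Field M]
    [Algebra K L] [Algebra L M] [Algebra K M] [IsScalarTower K L M]
    (h2 : (2 : K) ≠ 0)
    (d : K) (hd : ¬ IsSquare d)
    (s : L) (hs : s ^ 2 = algebraMap K L d)
    (hLgen : IntermediateField.adjoin K {s} = ⊤)
    (a b : K)
    (hns : ¬ IsSquare (algebraMap K L a + algebraMap K L b * s))
    (t : M) (ht : t ^ 2 = algebraMap L M (algebraMap K L a + algebraMap K L b * s))
    (hMgen : IntermediateField.adjoin L {t} = ⊤) :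
    (IsGalois K M ∧ Module.finrank K M = 4 ∧ IsCyclic (M ≃ₐ[K] M)) ↔
      ∃ e : K, e ≠ 0 ∧ a ^ 2 - d * b ^ 2 = d * e ^ 2 := by
  have hfin := finrank_eq_four_of_sq_eq hd hs hLgen hns ht hMgen
  have := finiteDimensional_of_sq_eq hd hs hLgen hns ht hMgen
  constructor
  · rintro ⟨hGal, -, hcyc⟩
    obtain ⟨σ, hσ⟩ := IsCyclic.exists_generator (α := M ≃ₐ[K] M)
    have hord : orderOf σ = 4 := by
      rw [orderOf_eq_card_of_forall_mem_zpowers hσ, IsGalois.card_aut_eq_finrank, hfin]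
    refine exists_ne_zero_sub_eq_mul_sq_of_generator hd hs hLgen hns ht hMgen σ (fun h => ?_)
      fun x hx => mem_range_algebraMap_of_apply_eq_self hσ hx
    have := hord ▸ orderOf_dvd_of_pow_eq_one h
    omega
  · rintro ⟨e, he, heq⟩
    obtain ⟨τ, hτ⟩ := exists_algEquiv_orderOf_eq_four h2 hd hs hLgen hns ht hMgen he heq
    obtain ⟨hGal, hcyc⟩ := isGalois_and_isCyclic_of_orderOf_eq_finrank τ (hτ.trans hfin.symm)
    exact ⟨hGal, hfin, hcyc⟩
end
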